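/- arXiv:2105.10446 — 5 statements merged into one kernel-verified Lean document; each statement's English description precedes it below -/
import Mathlib

section
/- The function Z ↦ log det(Z) is strictly concave on the set of symmetric positive definite n×n real matrices: for any β ∈ (0,1) and positive definite Z₁, Z₂, log det((1-β)Z₁ + βZ₂) ≥ (1-β) log det Z₁ + β log det Z₂, with equality if and only if Z₁ = Z₂. -/
/-!
Write `Z₁ = Bᴴ B` with `B` invertible and `Z₂ = Bᴴ M B`. Congruence by `B` adds `log det Z₁` to
every `log det` involved, so the claim reduces to `β log det M ≤ log det ((1 - β) • 1 + β • M)`, with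
equality iff `M = 1`. In an eigenbasis of `M` this is the sum over the eigenvalues `μ` of the
scalar inequality `β log μ ≤ log (1 - β + β μ)`, which is concavity of `log` between `1` and `μ`
and is strict unless `μ = 1`.
-/

open Matrix Finset
open scoped MatrixOrder ComplexOrder

namespace Real

theorem mul_log_lt_log_one_sub_add_mul {β x : ℝ} (hβ₀ : 0 < β) (hβ₁ : β < 1) (hx : 0 < x)
    (hx₁ : x ≠ 1) : β * log x < log (1 - β + β * x) := by
  simpa using strictConcaveOn_log_Ioi.2 (Set.mem_Ioi.2 one_pos) (Set.mem_Ioi.2 hx) hx₁.symm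
    (sub_pos.2 hβ₁) hβ₀ (by ring)

theorem mul_log_le_log_one_sub_add_mul {β x : ℝ} (hβ₀ : 0 < β) (hβ₁ : β < 1) (hx : 0 < x) :
    β * log x ≤ log (1 - β + β * x) := by
  rcases eq_or_ne x 1 with rfl | hx₁
  · simp
  · exact (mul_log_lt_log_one_sub_add_mul hβ₀ hβ₁ hx hx₁).le

end Real

theorem IsUnit.exists_eq_star_mul_mul {R : Type*} [Monoid R] [StarMul R] {b : R} (hb : IsUnit b)
    (z : R) : ∃ m, z = star b * m * b := by
  lift b to Rˣ using hb
  refine ⟨star (↑b⁻¹ : R) * z * ↑b⁻¹, ?_⟩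
  simp [← mul_assoc, ← star_mul]

namespace Matrix

variable {𝕜 ι : Type*} [RCLike 𝕜] [Fintype ι] [DecidableEq ι]

theorem PosDef.exists_isUnit_eq_star_mul_self {A : Matrix ι ι 𝕜} (hA : A.PosDef) :
    ∃ B : Matrix ι ι 𝕜, IsUnit B ∧ A = star B * B := by
  have hA' : IsStrictlyPositive A := isStrictlyPositive_iff_posDef.2 hA
  refine ⟨CFC.sqrt A, hA'.isUnit_cfcSqrt, ?_⟩
  rw [(CFC.sqrt_nonneg A).isSelfAdjoint.star_eq, CFC.sqrt_mul_sqrt_self A hA'.nonneg]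

theorem IsHermitian.det_cfc {A : Matrix ι ι 𝕜} (hA : A.IsHermitian) (f : ℝ → ℝ) :
    (cfc f A).det = ∏ i, (f (hA.eigenvalues i) : 𝕜) := by
  simp [hA.cfc_eq, IsHermitian.cfc, -Unitary.conjStarAlgAut_apply]

theorem IsHermitian.eq_one_of_eigenvalues_eq_one {A : Matrix ι ι 𝕜} (hA : A.IsHermitian)
    (h : ∀ i, hA.eigenvalues i = 1) : A = 1 :=
  CFC.eq_one_of_spectrum_subset_one A
    (hA.spectrum_real_eq_range_eigenvalues ▸ Set.range_subset_singleton.2 (funext h))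
    hA.isSelfAdjoint

section LogDet

variable {M : Matrix ι ι ℝ} {β : ℝ}

theorem IsHermitian.one_sub_smul_one_add_smul_eq_cfc (hM : M.IsHermitian) :
    (1 - β) • (1 : Matrix ι ι ℝ) + β • M = cfc (fun x ↦ 1 - β + β * x) M := by
  rw [cfc_const_add _ _ _ (by fun_prop) hM.isSelfAdjoint, cfc_const_mul_id _ _ hM.isSelfAdjoint,
    Algebra.algebraMap_eq_smul_one]

theorem PosDef.log_det_one_sub_smul_one_add_smul_sub_mul_log_det (hM : M.PosDef)
    (hβ₀ : 0 < β) (hβ₁ : β < 1) :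
    Real.log ((1 - β) • (1 : Matrix ι ι ℝ) + β • M).det - β * Real.log M.det =
      ∑ i, (Real.log (1 - β + β * hM.1.eigenvalues i) - β * Real.log (hM.1.eigenvalues i)) := by
  have hμ := hM.eigenvalues_pos
  have hfμ : ∀ i, 0 < 1 - β + β * hM.1.eigenvalues i := fun i ↦ by nlinarith [hμ i]
  rw [hM.1.one_sub_smul_one_add_smul_eq_cfc, hM.1.det_cfc, hM.1.det_eq_prod_eigenvalues]
  simp only [RCLike.ofReal_real_eq_id, id_eq]
  rw [Real.log_prod fun i _ ↦ (hfμ i).ne', Real.log_prod fun i _ ↦ (hμ i).ne', mul_sum,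
    sum_sub_distrib]

theorem PosDef.mul_log_det_le_log_det_one_sub_smul_one_add_smul (hM : M.PosDef)
    (hβ₀ : 0 < β) (hβ₁ : β < 1) :
    β * Real.log M.det ≤ Real.log ((1 - β) • (1 : Matrix ι ι ℝ) + β • M).det := by
  rw [← sub_nonneg, hM.log_det_one_sub_smul_one_add_smul_sub_mul_log_det hβ₀ hβ₁]
  exact sum_nonneg fun i _ ↦
    sub_nonneg.2 (Real.mul_log_le_log_one_sub_add_mul hβ₀ hβ₁ (hM.eigenvalues_pos i))

theorem PosDef.log_det_one_sub_smul_one_add_smul_eq_mul_log_det_iff (hM : M.PosDef)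
    (hβ₀ : 0 < β) (hβ₁ : β < 1) :
    Real.log ((1 - β) • (1 : Matrix ι ι ℝ) + β • M).det = β * Real.log M.det ↔ M = 1 := by
  refine ⟨fun h ↦ hM.1.eq_one_of_eigenvalues_eq_one fun i ↦ ?_, ?_⟩
  · rw [← sub_eq_zero, hM.log_det_one_sub_smul_one_add_smul_sub_mul_log_det hβ₀ hβ₁,
      sum_eq_zero_iff_of_nonneg fun i _ ↦ sub_nonneg.2
        (Real.mul_log_le_log_one_sub_add_mul hβ₀ hβ₁ (hM.eigenvalues_pos i))] at h
    by_contra hi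
    exact (Real.mul_log_lt_log_one_sub_add_mul hβ₀ hβ₁ (hM.eigenvalues_pos i) hi).ne'
      (sub_eq_zero.1 (h i (mem_univ i)))
  · rintro rfl
    simp [← add_smul]

theorem log_det_star_mul_mul {B X : Matrix ι ι ℝ} (hB : IsUnit B) (hX : X.det ≠ 0) :
    Real.log (star B * X * B).det = Real.log (star B * B).det + Real.log X.det := by
  have hB₀ : B.det ≠ 0 := (B.isUnit_iff_isUnit_det.1 hB).ne_zero
  have hB₀' : (star B).det ≠ 0 := ((star B).isUnit_iff_isUnit_det.1 hB.star).ne_zero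
  rw [det_mul, det_mul, det_mul, Real.log_mul (mul_ne_zero hB₀' hX) hB₀, Real.log_mul hB₀' hX,
    Real.log_mul hB₀' hB₀]
  ring

end LogDet

end Matrix

theorem logdet_strictly_concave {n : ℕ} (Z₁ Z₂ : Matrix (Fin n) (Fin n) ℝ)
    (h₁ : Z₁.PosDef) (h₂ : Z₂.PosDef) (β : ℝ) (hβ : β ∈ Set.Ioo (0 : ℝ) 1) :
    Real.log ((1 - β) • Z₁ + β • Z₂).det ≥
      (1 - β) * Real.log Z₁.det + β * Real.log Z₂.det ∧
    (Real.log ((1 - β) • Z₁ + β • Z₂).det =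
      (1 - β) * Real.log Z₁.det + β * Real.log Z₂.det ↔ Z₁ = Z₂) := by
  obtain ⟨hβ₀, hβ₁⟩ := hβ
  obtain ⟨B, hB, rfl⟩ := h₁.exists_isUnit_eq_star_mul_self
  obtain ⟨M, rfl⟩ := hB.exists_eq_star_mul_mul Z₂
  have hM : M.PosDef := hB.posDef_star_left_conjugate_iff.1 h₂
  set C := (1 - β) • (1 : Matrix (Fin n) (Fin n) ℝ) + β • M
  have hC : C.PosDef := (PosDef.one.smul (sub_pos.2 hβ₁)).add (hM.smul hβ₀)
  have hcomb : (1 - β) • (star B * B) + β • (star B * M * B) = star B * C * B := by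
    simp only [C, Matrix.mul_add, Matrix.add_mul, Matrix.mul_smul, Matrix.smul_mul, Matrix.mul_one]
  have hcancel : star B * B = star B * M * B ↔ M = 1 := by
    nth_rw 1 [← Matrix.mul_one (star B)]
    rw [hB.mul_left_inj, hB.star.mul_right_inj, eq_comm]
  rw [hcomb, log_det_star_mul_mul hB hC.det_pos.ne', log_det_star_mul_mul hB hM.det_pos.ne',
    hcancel, ← hM.log_det_one_sub_smul_one_add_smul_eq_mul_log_det_iff hβ₀ hβ₁]
  have hle := hM.mul_log_det_le_log_det_one_sub_smul_one_add_smul hβ₀ hβ₁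
  refine ⟨by linarith, by constructor <;> intro h <;> linarith⟩
end

section
/- Lower bound on the coding rate of concatenated data: for matrices Z^j ∈ ℝ^{n×m_j}, j = 1,…,k, with Z = [Z^1, …, Z^k] ∈ ℝ^{n×m} and m = Σⱼ m_j, and any ε > 0, Σⱼ (m_j/2) log det(I + (n/(m_j ε²)) Z^j (Z^j)ᵀ) ≤ (m/2) log det(I + (n/(m ε²)) Z Zᵀ), with equality if and only if Z^1(Z^1)ᵀ/m₁ = Z^2(Z^2)ᵀ/m₂ = ⋯ = Z^k(Z^k)ᵀ/m_k. -/
/-!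
Put `c = n / ε²`, `Aⱼ = Zʲ (Zʲ)ᵀ` and `Bⱼ = I + (c / mⱼ) Aⱼ`. With the weights `wⱼ = mⱼ / m`,
`∑ⱼ wⱼ Bⱼ = I + (c / m) Z Zᵀ`, so the inequality is Jensen's inequality for the concave function
`log det` on positive definite matrices, and equality holds iff all `Bⱼ` coincide, by strict
concavity. Strict concavity reduces, through the congruence `A = Sᵀ S`, `B = Sᵀ C S`, to
`b log det C < log det (a I + b C)` for `C ≠ I`, which is the strict concavity of `log` applied
to the eigenvalues of `C`.
-/

open Matrix Real

namespace Real

theorem mul_log_le_log_add_mul {a b x : ℝ} (ha : 0 ≤ a) (hb : 0 ≤ b) (hab : a + b = 1)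
    (hx : 0 < x) : b * log x ≤ log (a + b * x) := by
  simpa using strictConcaveOn_log_Ioi.concaveOn.2 (Set.mem_Ioi.2 one_pos) hx ha hb hab

theorem mul_log_lt_log_add_mul {a b x : ℝ} (ha : 0 < a) (hb : 0 < b) (hab : a + b = 1)
    (hx : 0 < x) (hx1 : x ≠ 1) : b * log x < log (a + b * x) := by
  simpa using strictConcaveOn_log_Ioi.2 (Set.mem_Ioi.2 one_pos) hx hx1.symm ha hb hab

end Real

namespace Matrix

section PosDef

variable {N : Type*}

theorem PosDef.smul_add_smul {A B : Matrix N N ℝ} (hA : A.PosDef) (hB : B.PosDef) {a b : ℝ}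
    (ha : 0 ≤ a) (hb : 0 ≤ b) (hab : a + b = 1) : (a • A + b • B).PosDef := by
  rcases ha.eq_or_lt with rfl | ha
  · simpa [(zero_add b).symm.trans hab] using hB
  · exact (hA.smul ha).add_posSemidef (hB.posSemidef.smul hb)

theorem convex_setOf_posDef : Convex ℝ {A : Matrix N N ℝ | A.PosDef} :=
  fun _ hA _ hB _ _ ha hb hab => hA.smul_add_smul hB ha hb hab

variable [Fintype N] [DecidableEq N]

open scoped MatrixOrder in
theorem PosDef.exists_eq_star_mul_self_and_eq_star_mul_mul {A B : Matrix N N ℝ}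
    (hA : A.PosDef) (hB : B.PosDef) :
    ∃ S C : Matrix N N ℝ, C.PosDef ∧ A = star S * S ∧ B = star S * C * S := by
  obtain ⟨S, hS, rfl⟩ :=
    CStarAlgebra.isStrictlyPositive_iff_eq_star_mul_self.1 hA.isStrictlyPositive
  lift S to (Matrix N N ℝ)ˣ using hS
  refine ⟨S, _, S⁻¹.isUnit.posDef_star_left_conjugate_iff.2 hB, rfl, ?_⟩
  simp only [← mul_assoc, ← star_mul, Units.inv_mul, star_one, one_mul]
  simp [mul_assoc]

theorem IsHermitian.det_smul_one_add_smul {C : Matrix N N ℝ} (hC : C.IsHermitian) (a b : ℝ) :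
    (a • 1 + b • C).det = ∏ i, (a + b * hC.eigenvalues i) := by
  conv_lhs => rw [hC.spectral_theorem,
    ← map_one (Unitary.conjStarAlgAut ℝ _ hC.eigenvectorUnitary), ← map_smul, ← map_smul,
    ← map_add]
  simp [-Unitary.conjStarAlgAut_apply, smul_one_eq_diagonal, ← diagonal_smul, det_diagonal]

theorem IsHermitian.eq_one_of_eigenvalues_eq_one_s3 {C : Matrix N N ℝ} (hC : C.IsHermitian)
    (h : ∀ i, hC.eigenvalues i = 1) : C = 1 := by
  rw [hC.spectral_theorem, show hC.eigenvalues = 1 from funext h]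
  simp [-Unitary.conjStarAlgAut_apply]

theorem PosDef.log_det_eq_sum_log_eigenvalues {C : Matrix N N ℝ} (hC : C.PosDef) :
    log C.det = ∑ i, log (hC.isHermitian.eigenvalues i) := by
  rw [hC.isHermitian.det_eq_prod_eigenvalues]
  simpa using Real.log_prod fun i _ => (hC.eigenvalues_pos i).ne'

theorem PosDef.log_det_smul_one_add_smul {C : Matrix N N ℝ} (hC : C.PosDef) {a b : ℝ}
    (ha : 0 < a) (hb : 0 ≤ b) :
    log (a • 1 + b • C).det = ∑ i, log (a + b * hC.isHermitian.eigenvalues i) := by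
  rw [hC.isHermitian.det_smul_one_add_smul]
  exact Real.log_prod fun i _ => by have := hC.eigenvalues_pos i; positivity

theorem PosDef.mul_log_det_lt_log_det_smul_one_add_smul {C : Matrix N N ℝ} (hC : C.PosDef)
    (hC1 : C ≠ 1) {a b : ℝ} (ha : 0 < a) (hb : 0 < b) (hab : a + b = 1) :
    b * log C.det < log (a • 1 + b • C).det := by
  obtain ⟨i, hi⟩ : ∃ i, hC.isHermitian.eigenvalues i ≠ 1 := by
    by_contra! h
    exact hC1 (hC.isHermitian.eq_one_of_eigenvalues_eq_one_s3 h)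
  rw [hC.log_det_eq_sum_log_eigenvalues, hC.log_det_smul_one_add_smul ha hb.le, Finset.mul_sum]
  exact Finset.sum_lt_sum
    (fun i _ => mul_log_le_log_add_mul ha.le hb.le hab (hC.eigenvalues_pos i))
    ⟨i, Finset.mem_univ i, mul_log_lt_log_add_mul ha hb hab (hC.eigenvalues_pos i) hi⟩

theorem strictConcaveOn_log_det :
    StrictConcaveOn ℝ {A : Matrix N N ℝ | A.PosDef} (fun A => log A.det) := by
  refine ⟨convex_setOf_posDef, fun A hA B hB hAB a b ha hb hab => ?_⟩
  obtain ⟨S, C, hC, rfl, rfl⟩ := PosDef.exists_eq_star_mul_self_and_eq_star_mul_mul hA hB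
  have hC1 : C ≠ 1 := by rintro rfl; simp at hAB
  have det_conj : ∀ X : Matrix N N ℝ, (star S * X * S).det = (star S * S).det * X.det := by
    intro X
    simp only [det_mul]
    ring
  have hcomb : a • (star S * S) + b • (star S * C * S) = star S * (a • 1 + b • C) * S := by
    simp only [mul_add, add_mul, mul_smul_comm, smul_mul_assoc, mul_one]
  have hSS := (hA : (star S * S).PosDef).det_pos
  have hpos := (PosDef.one.smul_add_smul hC ha.le hb.le hab).det_pos
  simp only [smul_eq_mul, hcomb, det_conj, log_mul hSS.ne' hC.det_pos.ne',
    log_mul hSS.ne' hpos.ne']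
  linear_combination
    hC.mul_log_det_lt_log_det_smul_one_add_smul hC1 ha hb hab + log (star S * S).det * hab

end PosDef

section Jensen

variable {N ι : Type*} [DecidableEq N] [Fintype ι] {A : ι → Matrix N N ℝ} {m : ι → ℝ} {c : ℝ}

theorem sum_div_smul_one_add_div_smul (hm : ∀ j, m j ≠ 0) (hM : ∑ j, m j ≠ 0) :
    ∑ j, (m j / ∑ i, m i) • (1 + (c / m j) • A j) = 1 + (c / ∑ j, m j) • ∑ j, A j := by
  have hcoef : ∀ j, m j / (∑ i, m i) * (c / m j) = c / ∑ i, m i := fun j => by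
    field_simp [hm j]
  simp only [smul_add, smul_smul, hcoef, Finset.sum_add_distrib, ← Finset.sum_smul,
    ← Finset.sum_div, div_self hM, one_smul, Finset.smul_sum]

variable [Fintype N]

theorem sum_mul_log_det_one_add_div_smul_le (hA : ∀ j, (A j).PosSemidef) (hm : ∀ j, 0 < m j)
    (hc : 0 ≤ c) :
    ∑ j, m j * log (1 + (c / m j) • A j).det ≤
      (∑ j, m j) * log (1 + (c / ∑ j, m j) • ∑ j, A j).det := by
  rcases isEmpty_or_nonempty ι with hι | hι
  · simp
  have hM : 0 < ∑ j, m j := Finset.sum_pos (fun j _ => hm j) Finset.univ_nonempty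
  have hB : ∀ j ∈ Finset.univ, 1 + (c / m j) • A j ∈ {B : Matrix N N ℝ | B.PosDef} :=
    fun j _ => PosDef.one.add_posSemidef ((hA j).smul (div_nonneg hc (hm j).le))
  have jensen := strictConcaveOn_log_det.concaveOn.le_map_sum
    (fun j _ => (div_pos (hm j) hM).le) (by rw [← Finset.sum_div, div_self hM.ne']) hB
  rw [sum_div_smul_one_add_div_smul (fun j => (hm j).ne') hM.ne'] at jensen
  simp only [smul_eq_mul, div_mul_eq_mul_div, ← Finset.sum_div, div_le_iff₀ hM] at jensen
  rwa [mul_comm (∑ j, m j)]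

theorem sum_mul_log_det_one_add_div_smul_eq_iff (hA : ∀ j, (A j).PosSemidef)
    (hm : ∀ j, 0 < m j) (hc : 0 ≤ c) :
    ∑ j, m j * log (1 + (c / m j) • A j).det =
        (∑ j, m j) * log (1 + (c / ∑ j, m j) • ∑ j, A j).det ↔
      ∀ j₁ j₂, (c / m j₁) • A j₁ = (c / m j₂) • A j₂ := by
  rcases isEmpty_or_nonempty ι with hι | hι
  · simp
  have hM : 0 < ∑ j, m j := Finset.sum_pos (fun j _ => hm j) Finset.univ_nonempty
  have hB : ∀ j ∈ Finset.univ, 1 + (c / m j) • A j ∈ {B : Matrix N N ℝ | B.PosDef} :=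
    fun j _ => PosDef.one.add_posSemidef ((hA j).smul (div_nonneg hc (hm j).le))
  have jensen_eq := strictConcaveOn_log_det.map_sum_eq_iff_of_pos (fun j _ => div_pos (hm j) hM)
    (by rw [← Finset.sum_div, div_self hM.ne']) hB
  rw [sum_div_smul_one_add_div_smul (fun j => (hm j).ne') hM.ne'] at jensen_eq
  simp only [smul_eq_mul, div_mul_eq_mul_div, ← Finset.sum_div, eq_div_iff hM.ne',
    Finset.mem_univ, forall_const, add_right_inj] at jensen_eq
  rw [mul_comm, eq_comm, jensen_eq]

end Jensen

end Matrix

theorem coding_rate_lower_bound {n k : ℕ} (mj : Fin k → ℕ) (hmj : ∀ j, 0 < mj j)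
    (Z : (j : Fin k) → Matrix (Fin n) (Fin (mj j)) ℝ) (ε : ℝ) (hε : 0 < ε) :
    let mt : ℝ := ((∑ j, mj j : ℕ) : ℝ)
    let lhs : ℝ := ∑ j, (mj j : ℝ) / 2 *
      Real.log ((1 + ((n : ℝ) / (mj j * ε ^ 2)) • (Z j * (Z j)ᵀ)).det)
    let rhs : ℝ := mt / 2 *
      Real.log ((1 + ((n : ℝ) / (mt * ε ^ 2)) • (∑ j, Z j * (Z j)ᵀ)).det)
    lhs ≤ rhs ∧
    (lhs = rhs ↔ ∀ j₁ j₂ : Fin k,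
      ((mj j₁ : ℝ))⁻¹ • (Z j₁ * (Z j₁)ᵀ) = ((mj j₂ : ℝ))⁻¹ • (Z j₂ * (Z j₂)ᵀ)) := by
  intro mt lhs rhs
  set c : ℝ := n / ε ^ 2
  have hc : 0 ≤ c := by positivity
  have hm : ∀ j, (0 : ℝ) < mj j := fun j => Nat.cast_pos.2 (hmj j)
  have hA : ∀ j, (Z j * (Z j)ᵀ).PosSemidef := fun j => by
    simpa using posSemidef_self_mul_conjTranspose (Z j)
  have hcoef : ∀ m : ℝ, (n : ℝ) / (m * ε ^ 2) = c / m := fun m => div_mul_eq_div_div_swap ..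
  have hlhs : lhs = (∑ j, (mj j : ℝ) * log (1 + (c / mj j) • (Z j * (Z j)ᵀ)).det) / 2 := by
    simp only [lhs, hcoef, Finset.sum_div, div_mul_eq_mul_div]
  have hrhs : rhs = (∑ j, (mj j : ℝ)) *
      log (1 + (c / ∑ j, (mj j : ℝ)) • ∑ j, Z j * (Z j)ᵀ).det / 2 := by
    simp only [rhs, mt, hcoef, Nat.cast_sum, div_mul_eq_mul_div]
  have hcancel : ∀ X Y : Matrix (Fin n) (Fin n) ℝ, c • X = c • Y ↔ X = Y := by
    rcases n.eq_zero_or_pos with rfl | hn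
    · exact fun X Y => iff_of_true (Subsingleton.elim _ _) (Subsingleton.elim _ _)
    · exact fun X Y => smul_right_inj (by positivity)
  rw [hlhs, hrhs, div_le_div_iff_of_pos_right two_pos, div_left_inj' two_ne_zero,
    sum_mul_log_det_one_add_div_smul_eq_iff hA hm hc]
  refine ⟨sum_mul_log_det_one_add_div_smul_le hA hm hc, forall₂_congr fun j₁ j₂ => ?_⟩
  rw [div_eq_mul_inv c, div_eq_mul_inv c, mul_smul, mul_smul, hcancel]
end

section
/- Upper bound on the coding rate of concatenated data: for matrices Z^j ∈ ℝ^{n×m_j}, j = 1,…,k, with Z = [Z^1, …, Z^k] ∈ ℝ^{n×m}, m = Σⱼ m_j, and any ε > 0, (m/2) log det(I + (n/(m ε²)) Z Zᵀ) ≤ Σⱼ (m/2) log det(I + (n/(m ε²)) Z^j (Z^j)ᵀ), with equality if and only if (Z^{j₁})ᵀ Z^{j₂} = 0 for all 1 ≤ j₁ < j₂ ≤ k. -/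
/-!
With `A_j = c Z_j Z_jᵀ` the claim compares `det (1 + ∑ A_j)` with `∏ det (1 + A_j)`, and by
induction it suffices to split off one block at a time. For `P = 1 + X Xᵀ` the matrix
determinant lemma gives `det (1 + X Xᵀ + Y Yᵀ) = det P * det (1 + Yᵀ P⁻¹ Y)`, while the
Woodbury identity `P⁻¹ = 1 - X (1 + Xᵀ X)⁻¹ Xᵀ` shows that `1 + Yᵀ Y` exceeds `1 + Yᵀ P⁻¹ Y`
by the positive semidefinite matrix `(Xᵀ Y)ᵀ (1 + Xᵀ X)⁻¹ (Xᵀ Y)`, which vanishes exactly when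
`Xᵀ Y = 0`. Adding a positive semidefinite `N` to a positive definite matrix multiplies the
determinant by some `det (1 + K) ≥ 1 + tr K` with `K` positive semidefinite and
`K = 0 ↔ N = 0`; this gives the inequality together with its equality case, and the logarithm
preserves both.
-/

open Matrix
open scoped MatrixOrder

theorem Finset.one_add_sum_le_prod_one_add {ι R : Type*} [CommSemiring R] [PartialOrder R]
    [IsOrderedRing R] (s : Finset ι) {f : ι → R} (hf : ∀ i ∈ s, 0 ≤ f i) :
    1 + ∑ i ∈ s, f i ≤ ∏ i ∈ s, (1 + f i) := by
  classical
  induction s using Finset.induction_on with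
  | empty => simp
  | insert a s ha ih =>
    have hfa := hf a (mem_insert_self a s)
    have hfs : ∀ i ∈ s, 0 ≤ f i := fun i hi => hf i (mem_insert_of_mem hi)
    rw [sum_insert ha, prod_insert ha]
    calc 1 + (f a + ∑ i ∈ s, f i)
        ≤ 1 + (f a + ∑ i ∈ s, f i) + f a * ∑ i ∈ s, f i :=
          le_add_of_nonneg_right (mul_nonneg hfa (sum_nonneg hfs))
      _ = (1 + f a) * (1 + ∑ i ∈ s, f i) := by ring
      _ ≤ (1 + f a) * ∏ i ∈ s, (1 + f i) := by
          gcongr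
          · exact add_nonneg zero_le_one hfa
          · exact ih hfs

theorem eq_mul_iff_eq_mul_and_eq_of_le {α : Type*} [Semiring α] [LinearOrder α]
    [IsStrictOrderedRing α] {a b c d : α} (hb : 0 < b) (hc : a ≤ b * c) (hd : c ≤ d) :
    a = b * d ↔ a = b * c ∧ c = d := by
  refine ⟨fun h => ?_, fun ⟨h, h'⟩ => h' ▸ h⟩
  have h' := le_antisymm hd (le_of_mul_le_mul_left (h ▸ hc) hb)
  exact ⟨h' ▸ h, h'⟩

namespace Matrix

theorem sqrt_smul_mul_transpose {n p : Type*} [Fintype p] {c : ℝ} (hc : 0 ≤ c)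
    (X : Matrix n p ℝ) : (√c • X) * (√c • X)ᵀ = c • (X * Xᵀ) := by
  rw [transpose_smul, Matrix.smul_mul, Matrix.mul_smul, smul_smul, Real.mul_self_sqrt hc]

variable {ι n p q : Type*} [Fintype n]

theorem PosSemidef.transpose_mul_mul_same [Fintype p] {Q : Matrix n n ℝ} (hQ : Q.PosSemidef)
    (M : Matrix n p ℝ) : (Mᵀ * Q * M).PosSemidef := by
  simpa using hQ.conjTranspose_mul_mul_same M

theorem posDef_one_add_transpose_mul [Fintype p] [DecidableEq p] (X : Matrix n p ℝ) :
    (1 + Xᵀ * X).PosDef := by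
  simpa using PosDef.one.add_posSemidef (posSemidef_conjTranspose_mul_self X)

theorem posSemidef_sum_mul_transpose {m : ι → Type*} [∀ i, Fintype (m i)] (s : Finset ι)
    (X : ∀ i, Matrix n (m i) ℝ) : (∑ i ∈ s, X i * (X i)ᵀ).PosSemidef :=
  posSemidef_sum s fun i _ => by simpa using posSemidef_self_mul_conjTranspose (X i)

theorem transpose_mul_sum_mul_transpose_eq_zero_iff {m : ι → Type*} [∀ i, Fintype (m i)]
    [Fintype p] (X : Matrix n p ℝ) (s : Finset ι) (Y : ∀ i, Matrix n (m i) ℝ) :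
    Xᵀ * ∑ i ∈ s, Y i * (Y i)ᵀ = 0 ↔ ∀ i ∈ s, Xᵀ * Y i = 0 := by
  refine ⟨fun h => ?_, fun h => ?_⟩
  · have hsum : ∑ i ∈ s, (Xᵀ * Y i) * (Xᵀ * Y i)ᵀ = 0 := by
      have h' := congrArg (· * X) h
      simp only [Matrix.mul_sum, Matrix.sum_mul, Matrix.zero_mul] at h'
      simpa [Matrix.mul_assoc] using h'
    have hnonneg : ∀ i ∈ s, 0 ≤ (Xᵀ * Y i) * (Xᵀ * Y i)ᵀ := fun i _ => by
      simpa using (posSemidef_self_mul_conjTranspose (Xᵀ * Y i)).nonneg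
    intro i hi
    rw [← self_mul_conjTranspose_eq_zero, conjTranspose_eq_transpose_of_trivial]
    exact (Finset.sum_eq_zero_iff_of_nonneg hnonneg).mp hsum i hi
  · rw [Matrix.mul_sum]
    exact Finset.sum_eq_zero fun i hi => by rw [← Matrix.mul_assoc, h i hi, Matrix.zero_mul]

variable [DecidableEq n]

theorem IsHermitian.det_one_add {K : Matrix n n ℝ} (hK : K.IsHermitian) :
    det (1 + K) = ∏ i, (1 + hK.eigenvalues i) := by
  set U := hK.eigenvectorUnitary
  conv_lhs => rw [hK.spectral_theorem, ← map_one (Unitary.conjStarAlgAut ℝ _ U)]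
  rw [← map_add, Unitary.conjStarAlgAut_apply,
    det_conj_of_mul_eq_one (Unitary.mul_star_self_of_mem U.2) (Unitary.star_mul_self_of_mem U.2)]
  simp [← diagonal_one, diagonal_add, det_diagonal]

theorem PosSemidef.one_add_trace_le_det_one_add {K : Matrix n n ℝ} (hK : K.PosSemidef) :
    1 + trace K ≤ det (1 + K) := by
  rw [hK.isHermitian.det_one_add, hK.isHermitian.trace_eq_sum_eigenvalues]
  simpa using Finset.one_add_sum_le_prod_one_add _ fun i _ => hK.eigenvalues_nonneg i

theorem PosSemidef.one_le_det_one_add {K : Matrix n n ℝ} (hK : K.PosSemidef) :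
    1 ≤ det (1 + K) := by
  linarith [hK.one_add_trace_le_det_one_add, hK.trace_nonneg]

theorem PosSemidef.det_one_add_eq_one_iff {K : Matrix n n ℝ} (hK : K.PosSemidef) :
    det (1 + K) = 1 ↔ K = 0 := by
  refine ⟨fun h => hK.trace_eq_zero_iff.mp ?_, fun h => by simp [h]⟩
  linarith [hK.one_add_trace_le_det_one_add, hK.trace_nonneg]

theorem PosSemidef.exists_eq_mul_transpose {B : Matrix n n ℝ} (hB : B.PosSemidef) :
    ∃ Y : Matrix n n ℝ, B = Y * Yᵀ := by
  obtain ⟨C, rfl⟩ := CStarAlgebra.nonneg_iff_eq_star_mul_self.mp hB.nonneg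
  exact ⟨Cᵀ, by simp [star_eq_conjTranspose]⟩

theorem PosDef.transpose_mul_mul_same_eq_zero_iff {Q : Matrix n n ℝ} (hQ : Q.PosDef)
    (M : Matrix n p ℝ) : Mᵀ * Q * M = 0 ↔ M = 0 := by
  obtain ⟨C, rfl⟩ := CStarAlgebra.nonneg_iff_eq_star_mul_self.mp hQ.posSemidef.nonneg
  have hC : IsUnit C.det := by
    have hQ' := (isUnit_iff_isUnit_det _).mp hQ.isUnit
    rw [det_mul] at hQ'
    exact (IsUnit.mul_iff.mp hQ').2
  have hCM : Mᵀ * (star C * C) * M = (C * M)ᴴ * (C * M) := by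
    simp [star_eq_conjTranspose, Matrix.mul_assoc]
  rw [hCM, conjTranspose_mul_self_eq_zero]
  refine ⟨fun h => ?_, fun h => by simp [h]⟩
  simpa [h] using (nonsing_inv_mul_cancel_left C M hC).symm

theorem PosDef.det_le_det_add {P N : Matrix n n ℝ} (hP : P.PosDef) (hN : N.PosSemidef) :
    det P ≤ det (P + N) := by
  obtain ⟨C, rfl⟩ := CStarAlgebra.nonneg_iff_eq_star_mul_self.mp hN.nonneg
  rw [star_eq_conjTranspose, det_add_mul _ _ ((isUnit_iff_isUnit_det _).mp hP.isUnit)]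
  exact le_mul_of_one_le_right hP.det_pos.le
    (hP.inv.posSemidef.mul_mul_conjTranspose_same C).one_le_det_one_add

theorem PosDef.det_add_eq_det_iff {P N : Matrix n n ℝ} (hP : P.PosDef) (hN : N.PosSemidef) :
    det (P + N) = det P ↔ N = 0 := by
  obtain ⟨C, rfl⟩ := CStarAlgebra.nonneg_iff_eq_star_mul_self.mp hN.nonneg
  rw [star_eq_conjTranspose, det_add_mul _ _ ((isUnit_iff_isUnit_det _).mp hP.isUnit),
    mul_eq_left₀ hP.det_pos.ne',
    (hP.inv.posSemidef.mul_mul_conjTranspose_same C).det_one_add_eq_one_iff,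
    conjTranspose_mul_self_eq_zero]
  simpa using hP.inv.transpose_mul_mul_same_eq_zero_iff Cᴴ

theorem posDef_one_add_mul_transpose [Fintype p] (X : Matrix n p ℝ) : (1 + X * Xᵀ).PosDef := by
  simpa using PosDef.one.add_posSemidef (posSemidef_self_mul_conjTranspose X)

theorem det_one_add_mul_transpose_add [Fintype p] [Fintype q] [DecidableEq q]
    (X : Matrix n p ℝ) (Y : Matrix n q ℝ) :
    det (1 + X * Xᵀ + Y * Yᵀ) = det (1 + X * Xᵀ) * det (1 + Yᵀ * (1 + X * Xᵀ)⁻¹ * Y) :=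
  det_add_mul Y Yᵀ ((isUnit_iff_isUnit_det _).mp (posDef_one_add_mul_transpose X).isUnit)

theorem one_add_transpose_mul_self_eq [Fintype p] [DecidableEq p] [DecidableEq q]
    (X : Matrix n p ℝ) (Y : Matrix n q ℝ) :
    1 + Yᵀ * Y = (1 + Yᵀ * (1 + X * Xᵀ)⁻¹ * Y) + (Xᵀ * Y)ᵀ * (1 + Xᵀ * X)⁻¹ * (Xᵀ * Y) := by
  have woodbury := add_mul_mul_inv_eq_sub 1 X 1 Xᵀ isUnit_one isUnit_one
    (by simpa using (posDef_one_add_transpose_mul X).isUnit)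
  simp only [inv_one, Matrix.mul_one, Matrix.one_mul] at woodbury
  rw [woodbury, transpose_mul, transpose_transpose]
  simp only [Matrix.mul_sub, Matrix.sub_mul, Matrix.mul_one, Matrix.mul_assoc]
  abel

theorem posDef_one_add_transpose_mul_inv_mul [Fintype p] [Fintype q] [DecidableEq q]
    (X : Matrix n p ℝ) (Y : Matrix n q ℝ) : (1 + Yᵀ * (1 + X * Xᵀ)⁻¹ * Y).PosDef := by
  simpa using PosDef.one.add_posSemidef
    ((posDef_one_add_mul_transpose X).inv.posSemidef.conjTranspose_mul_mul_same Y)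

section TwoBlocks

variable [Fintype p] [DecidableEq p] [Fintype q] [DecidableEq q]

theorem det_one_add_mul_transpose_add_le (X : Matrix n p ℝ) (Y : Matrix n q ℝ) :
    det (1 + X * Xᵀ + Y * Yᵀ) ≤ det (1 + X * Xᵀ) * det (1 + Y * Yᵀ) := by
  rw [det_one_add_mul_transpose_add, det_one_add_mul_comm Y, one_add_transpose_mul_self_eq X Y]
  exact mul_le_mul_of_nonneg_left ((posDef_one_add_transpose_mul_inv_mul X Y).det_le_det_add
    ((posDef_one_add_transpose_mul X).inv.posSemidef.transpose_mul_mul_same _))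
    (posDef_one_add_mul_transpose X).det_pos.le

theorem det_one_add_mul_transpose_add_eq_iff (X : Matrix n p ℝ) (Y : Matrix n q ℝ) :
    det (1 + X * Xᵀ + Y * Yᵀ) = det (1 + X * Xᵀ) * det (1 + Y * Yᵀ) ↔ Xᵀ * Y = 0 := by
  have hG := posDef_one_add_transpose_mul X
  rw [det_one_add_mul_transpose_add, det_one_add_mul_comm Y, one_add_transpose_mul_self_eq X Y,
    mul_right_inj' (posDef_one_add_mul_transpose X).det_pos.ne', eq_comm,
    (posDef_one_add_transpose_mul_inv_mul X Y).det_add_eq_det_iff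
      (hG.inv.posSemidef.transpose_mul_mul_same _)]
  exact hG.inv.transpose_mul_mul_same_eq_zero_iff (Xᵀ * Y)

end TwoBlocks

section Family

variable {m : ι → Type*} [∀ i, Fintype (m i)] [∀ i, DecidableEq (m i)]

theorem det_one_add_sum_mul_transpose_le (s : Finset ι) (X : ∀ i, Matrix n (m i) ℝ) :
    det (1 + ∑ i ∈ s, X i * (X i)ᵀ) ≤ ∏ i ∈ s, det (1 + X i * (X i)ᵀ) := by
  classical
  induction s using Finset.induction_on with
  | empty => simp
  | insert a s ha ih =>
    obtain ⟨Y, hY⟩ := (posSemidef_sum_mul_transpose s X).exists_eq_mul_transpose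
    rw [Finset.sum_insert ha, Finset.prod_insert ha, ← add_assoc, hY]
    calc _ ≤ det (1 + X a * (X a)ᵀ) * det (1 + Y * Yᵀ) := det_one_add_mul_transpose_add_le _ _
      _ ≤ _ := mul_le_mul_of_nonneg_left (hY ▸ ih) (posDef_one_add_mul_transpose _).det_pos.le

theorem det_one_add_sum_mul_transpose_eq_prod_iff (s : Finset ι) (X : ∀ i, Matrix n (m i) ℝ) :
    det (1 + ∑ i ∈ s, X i * (X i)ᵀ) = ∏ i ∈ s, det (1 + X i * (X i)ᵀ) ↔
      (s : Set ι).Pairwise fun i j => (X i)ᵀ * X j = 0 := by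
  classical
  induction s using Finset.induction_on with
  | empty => simp
  | insert a s ha ih =>
    obtain ⟨Y, hY⟩ := (posSemidef_sum_mul_transpose s X).exists_eq_mul_transpose
    have hsplit := eq_mul_iff_eq_mul_and_eq_of_le (posDef_one_add_mul_transpose (X a)).det_pos
      (det_one_add_mul_transpose_add_le (X a) Y) (hY ▸ det_one_add_sum_mul_transpose_le s X)
    have hsymm (b : ι) : (X b)ᵀ * X a = 0 ↔ (X a)ᵀ * X b = 0 := by
      rw [← transpose_eq_zero, transpose_mul, transpose_transpose]
    -- `(X a)ᵀ * Y = 0` becomes `(X a)ᵀ * (Y * Yᵀ) = 0`, i.e. `(X a)ᵀ * X i = 0` for all `i ∈ s`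
    rw [Finset.sum_insert ha, Finset.prod_insert ha, ← add_assoc, hY, hsplit,
      det_one_add_mul_transpose_add_eq_iff, ← mul_self_mul_conjTranspose_eq_zero,
      conjTranspose_eq_transpose_of_trivial, ← hY, ih,
      transpose_mul_sum_mul_transpose_eq_zero_iff, Finset.coe_insert,
      Set.pairwise_insert_of_notMem (by exact_mod_cast ha)]
    simp only [hsymm, and_self, Finset.mem_coe]
    exact and_comm

theorem det_one_add_smul_sum_mul_transpose_le {c : ℝ} (hc : 0 ≤ c) (s : Finset ι)
    (X : ∀ i, Matrix n (m i) ℝ) :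
    det (1 + c • ∑ i ∈ s, X i * (X i)ᵀ) ≤ ∏ i ∈ s, det (1 + c • (X i * (X i)ᵀ)) := by
  simpa only [sqrt_smul_mul_transpose hc, Finset.smul_sum] using
    det_one_add_sum_mul_transpose_le s fun i => √c • X i

theorem det_one_add_smul_sum_mul_transpose_eq_prod_iff {c : ℝ} (hc : 0 < c) (s : Finset ι)
    (X : ∀ i, Matrix n (m i) ℝ) :
    det (1 + c • ∑ i ∈ s, X i * (X i)ᵀ) = ∏ i ∈ s, det (1 + c • (X i * (X i)ᵀ)) ↔
      (s : Set ι).Pairwise fun i j => (X i)ᵀ * X j = 0 := by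
  simpa only [Finset.smul_sum, transpose_smul, Matrix.smul_mul, Matrix.mul_smul, smul_smul,
    Real.mul_self_sqrt hc.le, smul_eq_zero, hc.ne', false_or] using
    det_one_add_sum_mul_transpose_eq_prod_iff s fun i => √c • X i

end Family

end Matrix

theorem coding_rate_upper_bound_general {n k : ℕ} (mj : Fin k → ℕ)
    (Z : (j : Fin k) → Matrix (Fin n) (Fin (mj j)) ℝ) (ε : ℝ) (hε : 0 < ε) :
    let mt : ℝ := ((∑ j, mj j : ℕ) : ℝ)
    let lhs : ℝ := mt / 2 *
      Real.log ((1 + ((n : ℝ) / (mt * ε ^ 2)) • (∑ j, Z j * (Z j)ᵀ)).det)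
    let rhs : ℝ := ∑ j, mt / 2 *
      Real.log ((1 + ((n : ℝ) / (mt * ε ^ 2)) • (Z j * (Z j)ᵀ)).det)
    lhs ≤ rhs ∧
    (lhs = rhs ↔ ∀ j₁ j₂ : Fin k, j₁ ≠ j₂ → (Z j₁)ᵀ * Z j₂ = 0) := by
  intro mt lhs rhs
  dsimp only [lhs, rhs]
  set c : ℝ := n / (mt * ε ^ 2)
  rcases (show 0 ≤ c by positivity).eq_or_lt with hc | hc
  · -- `c = 0` forces `n = 0` or `mt = 0` (division by zero), so every `(Z i)ᵀ * Z j` is empty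
    have hZ (i j : Fin k) : (Z i)ᵀ * Z j = 0 := by
      rcases div_eq_zero_iff.mp hc.symm with hn | hmt
      · obtain rfl : n = 0 := by exact_mod_cast hn
        ext a b
        simp [mul_apply]
      · have hmi : mj i = 0 := Finset.sum_eq_zero_iff.mp
          (Nat.cast_eq_zero.mp ((mul_eq_zero.mp hmt).resolve_right (by positivity))) i
          (Finset.mem_univ _)
        ext a b
        exact absurd a.2 (by omega)
    simp [← hc, hZ]
  have hmt : mt ≠ 0 := fun h => by simp [c, h] at hc
  have hpos : 0 < det (1 + c • ∑ j, Z j * (Z j)ᵀ) :=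
    (PosDef.one.add_posSemidef ((posSemidef_sum_mul_transpose _ Z).smul hc.le)).det_pos
  have hposj (j : Fin k) : 0 < det (1 + c • (Z j * (Z j)ᵀ)) := by
    rw [← sqrt_smul_mul_transpose hc.le]
    exact (posDef_one_add_mul_transpose _).det_pos
  simp_rw [← Finset.mul_sum, ← Real.log_prod fun j _ => (hposj j).ne']
  refine ⟨mul_le_mul_of_nonneg_left
    (Real.log_le_log hpos (det_one_add_smul_sum_mul_transpose_le hc.le _ Z)) (by positivity), ?_⟩
  rw [mul_right_inj' (div_ne_zero hmt two_ne_zero),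
    Real.log_injOn_pos.eq_iff hpos (Finset.prod_pos fun j _ => hposj j),
    det_one_add_smul_sum_mul_transpose_eq_prod_iff hc, Finset.coe_univ, Set.pairwise_univ]
  rfl

theorem coding_rate_upper_bound {n k : ℕ} (mj : Fin k → ℕ) (hmj : ∀ j, 0 < mj j)
    (Z : (j : Fin k) → Matrix (Fin n) (Fin (mj j)) ℝ) (ε : ℝ) (hε : 0 < ε) :
    let mt : ℝ := ((∑ j, mj j : ℕ) : ℝ)
    let lhs : ℝ := mt / 2 *
      Real.log ((1 + ((n : ℝ) / (mt * ε ^ 2)) • (∑ j, Z j * (Z j)ᵀ)).det)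
    let rhs : ℝ := ∑ j, mt / 2 *
      Real.log ((1 + ((n : ℝ) / (mt * ε ^ 2)) • (Z j * (Z j)ᵀ)).det)
    lhs ≤ rhs ∧
    (lhs = rhs ↔ ∀ j₁ j₂ : Fin k, j₁ ≠ j₂ → (Z j₁)ᵀ * Z j₂ = 0) :=
  coding_rate_upper_bound_general mj Z ε hε
end

section
/- Upper bound on the rate reduction: for Z ∈ ℝ^{n×m}, a collection of nonnegative diagonal matrices Π = {Π^j}ⱼ₌₁ᵏ with Σⱼ Π^j = I, and ε > 0, letting Z^j ∈ ℝ^{n×m_j} be Z Π^j with zero columns removed (m_j = tr Π^j, here assuming Π^j has 0/1 diagonal entries), the rate reduction ΔR(Z, Π, ε) = (1/2) log det(I + (n/(mε²)) Z Zᵀ) − Σⱼ (m_j/(2m)) log det(I + (n/(m_j ε²)) Z^j (Z^j)ᵀ) satisfies ΔR(Z, Π, ε) ≤ Σⱼ (1/(2m)) log( det^m(I + (n/(mε²)) Z^j (Z^j)ᵀ) / det^{m_j}(I + (n/(m_j ε²)) Z^j (Z^j)ᵀ) ), with equality if and only if (Z^{j₁})ᵀ Z^{j₂} = 0 for all j₁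 ≠ j₂. -/
/-!
By the Weinstein–Aronszajn identity, `det (1 + c Z Zᵀ) = det (1 + c Zᵀ Z)`, and the positive
definite matrix `1 + c Zᵀ Z` has the diagonal blocks `1 + c (Zʲ)ᵀ Zʲ` for the partition of the
columns given by `π`. Fischer's inequality bounds its determinant by the product of the
determinants of these blocks, with equality iff the off-diagonal blocks `c (Zʲ¹)ᵀ Zʲ²` vanish.
Fischer's inequality comes from the Schur complement:
`det [[A, B], [Bᵀ, D]] = det A * det (D - Bᵀ A⁻¹ B) ≤ det A * det D`, because adding the positive
semidefinite `Bᵀ A⁻¹ B` to a positive definite matrix cannot decrease its determinant, and leaves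
it unchanged only if `B = 0`. After taking logarithms, the terms weighted by `mⱼ` are the same on
both sides.
-/

open Matrix

theorem eq_mul_iff_of_le_mul_of_le {α : Type*} [Field α] [LinearOrder α] [IsStrictOrderedRing α]
    {x y z w : α} (hy : 0 < y) (hx : x ≤ y * z) (hz : z ≤ w) :
    x = y * w ↔ x = y * z ∧ z = w := by
  refine ⟨fun h => ?_, fun ⟨h₁, h₂⟩ => h₂ ▸ h₁⟩
  have h₂ := le_antisymm hz (le_of_mul_le_mul_left (h ▸ hx) hy)
  exact ⟨h₂ ▸ h, h₂⟩

namespace Matrix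

/-- The matrix `Zʲ` of the rate reduction. -/
def toColBlock {N ι κ α : Type*} (Z : Matrix N ι α) (b : ι → κ) (k : κ) :
    Matrix N {i // b i = k} α :=
  Z.submatrix id Subtype.val

theorem toColBlock_smul {N ι κ R α : Type*} [SMul R α] (Z : Matrix N ι α) (b : ι → κ) (k : κ)
    (r : R) : (r • Z).toColBlock b k = r • Z.toColBlock b k :=
  rfl

variable {ι : Type*} [Fintype ι]

theorem PosDef.conjTranspose_mul_mul_eq_zero_iff {m : Type*} [Fintype m] {A : Matrix ι ι ℝ}
    (hA : A.PosDef) {B : Matrix ι m ℝ} : Bᴴ * A * B = 0 ↔ B = 0 := by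
  refine ⟨fun h => ext_iff_mulVec.mpr fun x => ?_, fun h => by rw [h, Matrix.mul_zero]⟩
  rw [zero_mulVec]
  by_contra hx
  have hpos := hA.dotProduct_mulVec_pos hx
  rw [star_mulVec, ← dotProduct_mulVec, mulVec_mulVec, mulVec_mulVec, h, zero_mulVec,
    dotProduct_zero] at hpos
  exact hpos.false

variable [DecidableEq ι]

theorem PosSemidef.det_one_add_eq_prod {E : Matrix ι ι ℝ} (hE : E.PosSemidef) :
    (1 + E).det = ∏ i, (1 + hE.1.eigenvalues i) := by
  conv_lhs => rw [hE.1.spectral_theorem,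
    ← map_one (Unitary.conjStarAlgAut ℝ _ hE.1.eigenvectorUnitary), ← map_add]
  rw [Unitary.conjStarAlgAut_apply, det_mul, mul_comm, det_mul, ← mul_assoc, ← det_mul,
    Unitary.coe_star_mul_self, det_one, one_mul, ← diagonal_one, diagonal_add, det_diagonal]
  rfl

theorem PosSemidef.one_le_det_one_add_s7 {E : Matrix ι ι ℝ} (hE : E.PosSemidef) :
    1 ≤ (1 + E).det := by
  rw [hE.det_one_add_eq_prod]
  exact Finset.one_le_prod fun i _ => le_add_of_nonneg_right (hE.eigenvalues_nonneg i)

theorem PosSemidef.det_one_add_eq_one_iff_s7 {E : Matrix ι ι ℝ} (hE : E.PosSemidef) :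
    (1 + E).det = 1 ↔ E = 0 := by
  refine ⟨fun h => ?_, fun h => by rw [h, add_zero, det_one]⟩
  rw [← hE.1.eigenvalues_eq_zero_iff]
  by_contra hne
  obtain ⟨i, hi⟩ := Function.ne_iff.mp hne
  have hlt : ∏ _i : ι, (1 : ℝ) < ∏ i, (1 + hE.1.eigenvalues i) :=
    Finset.prod_lt_prod (fun _ _ => one_pos)
      (fun i _ => le_add_of_nonneg_right (hE.eigenvalues_nonneg i))
      ⟨i, Finset.mem_univ i, lt_add_of_pos_right 1 ((hE.eigenvalues_nonneg i).lt_of_ne' hi)⟩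
  rw [Finset.prod_const_one, ← hE.det_one_add_eq_prod, h] at hlt
  exact hlt.false

open scoped MatrixOrder in
theorem PosDef.det_le_det_add_s7 {P Q : Matrix ι ι ℝ} (hP : P.PosDef) (hQ : Q.PosSemidef) :
    P.det ≤ (P + Q).det ∧ ((P + Q).det = P.det ↔ Q = 0) := by
  obtain ⟨W, rfl⟩ := CStarAlgebra.nonneg_iff_eq_star_mul_self.mp hQ.nonneg
  rw [star_eq_conjTranspose]
  have hE : (W * P⁻¹ * Wᴴ).PosSemidef := hP.inv.posSemidef.mul_mul_conjTranspose_same W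
  rw [det_add_mul _ _ ((isUnit_iff_isUnit_det P).mp hP.isUnit)]
  refine ⟨le_mul_of_one_le_right hP.det_pos.le hE.one_le_det_one_add_s7, ?_⟩
  rw [mul_eq_left₀ hP.det_pos.ne', hE.det_one_add_eq_one_iff_s7, conjTranspose_mul_self_eq_zero]
  simpa only [conjTranspose_conjTranspose, conjTranspose_eq_zero] using
    hP.inv.conjTranspose_mul_mul_eq_zero_iff (B := Wᴴ)

theorem PosDef.det_le_det_toSquareBlockProp_mul {M : Matrix ι ι ℝ} (hM : M.PosDef)
    (p : ι → Prop) [DecidablePred p] :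
    M.det ≤ (M.toSquareBlockProp p).det * (M.toSquareBlockProp (¬p ·)).det ∧
      (M.det = (M.toSquareBlockProp p).det * (M.toSquareBlockProp (¬p ·)).det ↔
        M.toBlock p (¬p ·) = 0) := by
  set A := M.toSquareBlockProp p
  set B := M.toBlock p (¬p ·)
  set D := M.toSquareBlockProp (¬p ·)
  have hA : A.PosDef := hM.submatrix Subtype.val_injective
  let := hA.isUnit.invertible
  have hblocks : fromBlocks A B Bᴴ D = M.submatrix (Equiv.sumCompl p) (Equiv.sumCompl p) := by
    have hC : M.toBlock (¬p ·) p = Bᴴ := by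
      ext i j
      simpa [B] using hM.1.apply j i
    rw [← hC]
    ext (i | i) (j | j) <;> rfl
  have hdet : M.det = A.det * (D - Bᴴ * A⁻¹ * B).det := by
    rw [← det_submatrix_equiv_self (Equiv.sumCompl p), ← hblocks, det_fromBlocks₁₁,
      invOf_eq_nonsing_inv]
  have hS : (D - Bᴴ * A⁻¹ * B).PosDef := by
    have hpsd := (PosDef.fromBlocks₁₁ B D hA).mp (hblocks ▸ hM.posSemidef.submatrix _)
    refine hpsd.posDef_iff_det_ne_zero.mpr fun h0 => ?_
    have := hM.det_pos
    rw [hdet, h0, mul_zero] at this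
    exact this.false
  obtain ⟨hle, heq⟩ := hS.det_le_det_add_s7 (hA.inv.posSemidef.conjTranspose_mul_mul_same B)
  rw [sub_add_cancel] at hle heq
  rw [hdet, mul_right_inj' hA.det_pos.ne', eq_comm, heq, hA.inv.conjTranspose_mul_mul_eq_zero_iff]
  exact ⟨mul_le_mul_of_nonneg_left hle hA.det_pos.le, Iff.rfl⟩

/-- **Fischer's inequality**. -/
theorem PosDef.det_le_prod_det_toSquareBlock {κ : Type*} [Fintype κ] [DecidableEq κ]
    {M : Matrix ι ι ℝ} (hM : M.PosDef) (b : ι → κ) :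
    M.det ≤ ∏ k, (M.toSquareBlock b k).det ∧
      (M.det = ∏ k, (M.toSquareBlock b k).det ↔ ∀ i j, b i ≠ b j → M i j = 0) := by
  suffices ∀ s : Finset κ, (∀ i, b i ∈ s) → M.det ≤ ∏ k ∈ s, (M.toSquareBlock b k).det ∧
      (M.det = ∏ k ∈ s, (M.toSquareBlock b k).det ↔ ∀ i j, b i ≠ b j → M i j = 0) from
    this Finset.univ fun i => Finset.mem_univ (b i)
  intro s
  induction s using Finset.induction_on generalizing ι with
  | empty =>
    intro hb
    have : IsEmpty ι := ⟨fun i => Finset.notMem_empty _ (hb i)⟩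
    simp
  | insert a s ha ih =>
    intro hb
    obtain ⟨hle₁, heq₁⟩ := hM.det_le_det_toSquareBlockProp_mul (b · = a)
    set M' := M.toSquareBlockProp (¬b · = a)
    have hM' : M'.PosDef := hM.submatrix Subtype.val_injective
    obtain ⟨hle₂, heq₂⟩ := ih hM' (fun i => b i)
      (fun i => Finset.mem_of_mem_insert_of_ne (hb i) i.2)
    have hblock : ∀ k ∈ s,
        (M'.toSquareBlock (fun i => b i) k).det = (M.toSquareBlock b k).det := by
      intro k hk
      let e : {i : {i // ¬b i = a} // b i = k} ≃ {i // b i = k} :=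
        Equiv.subtypeSubtypeEquivSubtype fun {i} (hi : b i = k) => hi ▸ ne_of_mem_of_not_mem hk ha
      rw [toSquareBlock_def, ← det_reindex_self e.symm]
      rfl
    rw [Finset.prod_congr rfl hblock] at hle₂ heq₂
    change M.det ≤ (M.toSquareBlock b a).det * M'.det at hle₁
    change M.det = (M.toSquareBlock b a).det * M'.det ↔ _ at heq₁
    have hA : 0 < (M.toSquareBlock b a).det := (hM.submatrix Subtype.val_injective).det_pos
    rw [Finset.prod_insert ha, eq_mul_iff_of_le_mul_of_le hA hle₁ hle₂, heq₁, heq₂]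
    refine ⟨hle₁.trans (mul_le_mul_of_nonneg_left hle₂ hA.le), ⟨?_, fun h => ?_⟩⟩
    · rintro ⟨hcross, hrest⟩ i j hij
      by_cases hi : b i = a
      · exact congr_fun₂ hcross ⟨i, hi⟩ ⟨j, fun hj => hij (hi.trans hj.symm)⟩
      by_cases hj : b j = a
      · have hji : M j i = 0 := congr_fun₂ hcross ⟨j, hj⟩ ⟨i, hi⟩
        rw [← hM.1.apply, hji, star_zero]
      exact hrest ⟨i, hi⟩ ⟨j, hj⟩ hij
    · exact ⟨ext fun i j => h i j fun e => j.2 (e ▸ i.2), fun i j => h i j⟩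

theorem det_one_add_mul_transpose_le_prod {N κ : Type*} [Fintype N] [DecidableEq N]
    [Fintype κ] [DecidableEq κ] (Z : Matrix N ι ℝ) (b : ι → κ) :
    (1 + Z * Zᵀ).det ≤ ∏ k, (1 + Z.toColBlock b k * (Z.toColBlock b k)ᵀ).det ∧
      ((1 + Z * Zᵀ).det = ∏ k, (1 + Z.toColBlock b k * (Z.toColBlock b k)ᵀ).det ↔
        ∀ k₁ k₂, k₁ ≠ k₂ → (Z.toColBlock b k₁)ᵀ * Z.toColBlock b k₂ = 0) := by
  have hM : (1 + Zᵀ * Z).PosDef := by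
    simpa using PosDef.one.add_posSemidef (posSemidef_conjTranspose_mul_self Z)
  have hblock : ∀ k,
      (1 + Zᵀ * Z).toSquareBlock b k = 1 + (Z.toColBlock b k)ᵀ * Z.toColBlock b k := by
    intro k
    ext i j
    simp [toColBlock, toSquareBlock_def, one_apply, mul_apply, Subtype.ext_iff]
  obtain ⟨hle, heq⟩ := hM.det_le_prod_det_toSquareBlock b
  simp only [hblock, det_one_add_mul_comm _ Z, det_one_add_mul_comm _ (Z.toColBlock b _)]
    at hle heq
  refine ⟨hle, heq.trans ?_⟩
  have hentry : ∀ i j, b i ≠ b j → (1 + Zᵀ * Z : Matrix ι ι ℝ) i j = (Zᵀ * Z) i j :=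
    fun i j hij => by rw [add_apply, one_apply_ne (ne_of_apply_ne b hij), zero_add]
  constructor
  · rintro h k₁ k₂ hk
    ext ⟨i, rfl⟩ ⟨j, rfl⟩
    simpa [hentry i j hk, toColBlock, mul_apply] using h i j hk
  · intro h i j hij
    simpa [hentry i j hij, toColBlock, mul_apply] using
      congr_fun₂ (h (b i) (b j) hij) ⟨i, rfl⟩ ⟨j, rfl⟩

theorem det_one_add_smul_mul_transpose_pos {N p : Type*} [Fintype N] [DecidableEq N] [Fintype p]
    {c : ℝ} (hc : 0 ≤ c) (A : Matrix N p ℝ) : 0 < (1 + c • (A * Aᵀ)).det := by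
  have hA : (A * Aᵀ).PosSemidef := by simpa using posSemidef_self_mul_conjTranspose A
  exact (PosDef.one.add_posSemidef (hA.smul hc)).det_pos

theorem det_one_add_smul_mul_transpose_le_prod {N κ : Type*} [Fintype N] [DecidableEq N]
    [Fintype κ] [DecidableEq κ] (Z : Matrix N ι ℝ) (b : ι → κ) {c : ℝ} (hc : 0 ≤ c) :
    (1 + c • (Z * Zᵀ)).det ≤ ∏ k, (1 + c • (Z.toColBlock b k * (Z.toColBlock b k)ᵀ)).det ∧
      ((1 + c • (Z * Zᵀ)).det = ∏ k, (1 + c • (Z.toColBlock b k * (Z.toColBlock b k)ᵀ)).det ↔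
        ∀ k₁ k₂, k₁ ≠ k₂ → c • ((Z.toColBlock b k₁)ᵀ * Z.toColBlock b k₂) = 0) := by
  have hc' : √c * √c = c := Real.mul_self_sqrt hc
  simpa only [toColBlock_smul, transpose_smul, Matrix.smul_mul, Matrix.mul_smul, smul_smul, hc']
    using det_one_add_mul_transpose_le_prod (√c • Z) b

end Matrix

theorem rate_reduction_upper_bound {n m k : ℕ} (Z : Matrix (Fin n) (Fin m) ℝ)
    (π : Fin m → Fin k) (hmj : ∀ j, 0 < Fintype.card {i : Fin m // π i = j})
    (ε : ℝ) (hε : 0 < ε) :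
    let mj : Fin k → ℕ := fun j => Fintype.card {i : Fin m // π i = j}
    let Zb : (j : Fin k) → Matrix (Fin n) {i : Fin m // π i = j} ℝ :=
      fun j => Z.submatrix id Subtype.val
    let ΔR : ℝ :=
      (1 / 2 : ℝ) * Real.log ((1 + ((n : ℝ) / (m * ε ^ 2)) • (Z * Zᵀ)).det) -
        ∑ j, ((mj j : ℝ) / (2 * m)) *
          Real.log ((1 + ((n : ℝ) / (mj j * ε ^ 2)) • (Zb j * (Zb j)ᵀ)).det)
    let rhs : ℝ := ∑ j, (1 / (2 * (m : ℝ))) *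
      Real.log (((1 + ((n : ℝ) / (m * ε ^ 2)) • (Zb j * (Zb j)ᵀ)).det ^ m) /
        ((1 + ((n : ℝ) / (mj j * ε ^ 2)) • (Zb j * (Zb j)ᵀ)).det ^ (mj j)))
    ΔR ≤ rhs ∧
    (ΔR = rhs ↔ ∀ j₁ j₂ : Fin k, j₁ ≠ j₂ → (Zb j₁)ᵀ * Zb j₂ = 0) := by
  intro mj Zb ΔR rhs
  set c : ℝ := n / (m * ε ^ 2)
  have hc : 0 ≤ c := by positivity
  have hm : Fin k → (m : ℝ) ≠ 0 := fun j => by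
    obtain ⟨⟨i, -⟩⟩ := Fintype.card_pos_iff.mp (hmj j)
    exact Nat.cast_ne_zero.mpr i.pos.ne'
  have hR : ∀ j, 0 < (1 + c • (Zb j * (Zb j)ᵀ)).det := fun j =>
    det_one_add_smul_mul_transpose_pos hc (Zb j)
  have hrhs : rhs = 1 / 2 * ∑ j, Real.log (1 + c • (Zb j * (Zb j)ᵀ)).det -
      ∑ j, ((mj j : ℝ) / (2 * m)) *
        Real.log ((1 + ((n : ℝ) / (mj j * ε ^ 2)) • (Zb j * (Zb j)ᵀ)).det) := by
    rw [Finset.mul_sum, ← Finset.sum_sub_distrib]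
    refine Finset.sum_congr rfl fun j _ => ?_
    have hQ := det_one_add_smul_mul_transpose_pos
      (by positivity : 0 ≤ (n : ℝ) / (mj j * ε ^ 2)) (Zb j)
    rw [Real.log_div (pow_ne_zero _ (hR j).ne') (pow_ne_zero _ hQ.ne'), Real.log_pow,
      Real.log_pow]
    field_simp [hm j]
  -- For `n = 0` the scale `c` vanishes, but then so do all the products `(Zʲ¹)ᵀ Zʲ²`.
  have hcross : ∀ j₁ j₂, c • ((Z.toColBlock π j₁)ᵀ * Z.toColBlock π j₂) = 0 ↔
      (Z.toColBlock π j₁)ᵀ * Z.toColBlock π j₂ = 0 := by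
    intro j₁ j₂
    rcases Nat.eq_zero_or_pos n with rfl | hn
    · simp only [empty_mul_empty, smul_zero]
    · exact smul_eq_zero_iff_right
        (div_ne_zero (by positivity) (mul_ne_zero (hm j₁) (by positivity)))
  obtain ⟨hle, heq⟩ := det_one_add_smul_mul_transpose_le_prod Z π hc
  simp only [hcross] at heq
  have hL := det_one_add_smul_mul_transpose_pos hc Z
  have hprod : 0 < ∏ j, (1 + c • (Zb j * (Zb j)ᵀ)).det := Finset.prod_pos fun j _ => hR j
  rw [hrhs, sub_le_sub_iff_right, sub_left_inj, ← Real.log_prod fun j _ => (hR j).ne',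
    mul_le_mul_iff_right₀ one_half_pos, mul_right_inj' one_half_pos.ne',
    Real.log_le_log_iff hL hprod, Real.log_injOn_pos.eq_iff hL hprod]
  exact ⟨hle, heq⟩
end

section
/- Optimal rate reduction forces orthogonality: let Π = {Π^j}ⱼ be 0/1 diagonal membership matrices with Σⱼ Π^j = I, and suppose Z⋆ = [Z⋆^1, …, Z⋆^k] maximizes ΔR(Z, Π, ε) subject to ‖Z Π^j‖_F² = tr(Π^j) and rank(Z Π^j) ≤ d_j for each j. If n ≥ Σⱼ d_j, then (Z⋆^{j₁})ᵀ Z⋆^{j₂} = 0 for all 1 ≤ j₁ < j₂ ≤ k, i.e., the optimal representations of different classes lie in pairwise orthogonal subspaces. -/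
/-!
Write `W j = Z * Πʲ` for the class blocks of `Z` and `c = n / (m ε²)`. The constraints and the
compression terms of `ΔR` depend on `Z` only through the Gram matrices `(W j)ᵀ * W j`, whereas the
expansion term is `½ log det (1 + c ∑ⱼ W j (W j)ᵀ)`. For positive semidefinite `A` and `B`,
`det (1 + A + B) ≤ det (1 + A) det (1 + B)`, with equality if `A B = 0` and strict inequality
otherwise. Since `∑ⱼ rank (W j) ≤ ∑ⱼ d j ≤ n`, the blocks can be moved isometrically into mutually
orthogonal subspaces of `ℝⁿ`. This keeps every Gram matrix, hence feasibility and the compression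
terms, and turns the expansion term into `½ ∑ⱼ log det (1 + c W j (W j)ᵀ)`, which strictly exceeds
its old value as soon as `(W j₁)ᵀ * W j₂ ≠ 0` for some `j₁ ≠ j₂`.
-/

open Matrix

/-- The diagonal 0/1 membership matrix of class `j` for a column partition `π`. -/
noncomputable def memMat {m k : ℕ} (π : Fin m → Fin k) (j : Fin k) :
    Matrix (Fin m) (Fin m) ℝ :=
  Matrix.diagonal fun i => if π i = j then 1 else 0

/-- The rate reduction objective `ΔR(Z, Π, ε)`. -/
noncomputable def deltaR {n m k : ℕ} (π : Fin m → Fin k) (ε : ℝ)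
    (Z : Matrix (Fin n) (Fin m) ℝ) : ℝ :=
  (1 / 2 : ℝ) * Real.log ((1 + ((n : ℝ) / (m * ε ^ 2)) • (Z * Zᵀ)).det) -
    ∑ j, ((memMat π j).trace / (2 * m)) *
      Real.log ((1 + ((n : ℝ) / ((memMat π j).trace * ε ^ 2)) • (Z * memMat π j * Zᵀ)).det)

open scoped MatrixOrder

namespace Matrix

section CommRing

variable {R n : Type*} [CommRing R] [Fintype n] [DecidableEq n]

theorem det_one_add_add_of_mul_eq_zero {A B : Matrix n n R} (h : A * B = 0) :
    (1 + A + B).det = (1 + A).det * (1 + B).det := by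
  rw [← det_mul, mul_add, add_mul, add_mul, h, add_zero, Matrix.one_mul, Matrix.mul_one,
    Matrix.one_mul, add_assoc]

theorem det_one_add_sum_eq_prod {ι : Type*} [DecidableEq ι] (s : Finset ι) {A : ι → Matrix n n R}
    (h : (s : Set ι).Pairwise fun i j => A i * A j = 0) :
    (1 + ∑ i ∈ s, A i).det = ∏ i ∈ s, (1 + A i).det := by
  induction s using Finset.induction_on with
  | empty => simp
  | insert a s ha ih =>
    have hcross : A a * ∑ i ∈ s, A i = 0 := Finset.mul_sum s A (A a) ▸ Finset.sum_eq_zero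
      fun i hi => h (Finset.mem_insert_self a s) (Finset.mem_insert_of_mem hi)
        (ne_of_mem_of_not_mem hi ha).symm
    rw [Finset.sum_insert ha, Finset.prod_insert ha, ← add_assoc,
      det_one_add_add_of_mul_eq_zero hcross, ih (h.mono (by simp))]

theorem det_one_add_smul_mul_transpose_comm {m : Type*} [Fintype m] [DecidableEq m]
    (c : R) (X : Matrix n m R) : (1 + c • (X * Xᵀ)).det = (1 + c • (Xᵀ * X)).det := by
  rw [← Matrix.smul_mul, det_one_add_mul_comm, Matrix.mul_smul]

end CommRing

section

variable {n : Type*} [Fintype n] [DecidableEq n]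

theorem IsHermitian.det_one_add_s10 {A : Matrix n n ℝ} (hA : A.IsHermitian) :
    (1 + A).det = ∏ i, (1 + hA.eigenvalues i) := by
  conv_lhs => rw [hA.spectral_theorem,
    ← map_one (Unitary.conjStarAlgAut ℝ _ hA.eigenvectorUnitary), ← map_add, ← diagonal_one,
    diagonal_add]
  simp [-Unitary.conjStarAlgAut_apply]

namespace PosSemidef

variable {A B : Matrix n n ℝ}

theorem one_le_det_one_add_s10 (hA : A.PosSemidef) : 1 ≤ (1 + A).det := by
  rw [hA.isHermitian.det_one_add_s10]
  exact Finset.one_le_prod fun i _ => le_add_of_nonneg_right (hA.eigenvalues_nonneg i)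

theorem one_lt_det_one_add (hA : A.PosSemidef) (h : A ≠ 0) : 1 < (1 + A).det := by
  have hev : hA.isHermitian.eigenvalues ≠ 0 := mt hA.isHermitian.eigenvalues_eq_zero_iff.mp h
  obtain ⟨i, hi⟩ := Function.ne_iff.mp hev
  rw [hA.isHermitian.det_one_add_s10]
  calc (1 : ℝ) = ∏ _j : n, 1 := Finset.prod_const_one.symm
    _ < _ := Finset.prod_lt_prod (fun _ _ => one_pos) (fun j _ => ?_) ⟨i, Finset.mem_univ i, ?_⟩
  · exact le_add_of_nonneg_right (hA.eigenvalues_nonneg j)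
  · exact lt_add_of_pos_right 1 ((hA.eigenvalues_nonneg i).lt_of_ne' hi)

theorem mul_eq_zero_of_conjTranspose_mul_mul_eq_zero {m : Type*} [Fintype m] {M : Matrix n n ℝ}
    (hM : M.PosSemidef) {X : Matrix n m ℝ} (h : Xᴴ * M * X = 0) : M * X = 0 := by
  obtain ⟨B, rfl⟩ := CStarAlgebra.nonneg_iff_eq_star_mul_self.mp hM.nonneg
  have hBX : (B * X)ᴴ * (B * X) = 0 := by
    rw [← h, conjTranspose_mul, star_eq_conjTranspose]; simp only [Matrix.mul_assoc]
  rw [star_eq_conjTranspose, Matrix.mul_assoc, conjTranspose_mul_self_eq_zero.mp hBX,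
    Matrix.mul_zero]

end PosSemidef

namespace PosDef

variable {P R : Matrix n n ℝ}

theorem det_add_conjTranspose_mul_self {m : Type*} [Fintype m] [DecidableEq m] (hP : P.PosDef)
    (S : Matrix m n ℝ) : (P + Sᴴ * S).det = P.det * (1 + S * P⁻¹ * Sᴴ).det := by
  have hPinv : P * P⁻¹ = 1 := mul_nonsing_inv P (isUnit_iff_ne_zero.mpr hP.det_pos.ne')
  have hfac : P + Sᴴ * S = P * (1 + P⁻¹ * Sᴴ * S) := by
    rw [mul_add, mul_one, ← Matrix.mul_assoc, ← Matrix.mul_assoc, hPinv, Matrix.one_mul]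
  rw [hfac, det_mul, det_one_add_mul_comm, Matrix.mul_assoc]

theorem det_lt_det_add (hP : P.PosDef) (hR : R.PosSemidef) (h : R ≠ 0) :
    P.det < (P + R).det := by
  obtain ⟨S, rfl⟩ := CStarAlgebra.nonneg_iff_eq_star_mul_self.mp hR.nonneg
  rw [star_eq_conjTranspose] at h ⊢
  rw [hP.det_add_conjTranspose_mul_self]
  refine lt_mul_of_one_lt_right hP.det_pos
    ((hP.inv.posSemidef.mul_mul_conjTranspose_same S).one_lt_det_one_add fun h0 => h ?_)
  have hS : P⁻¹ * Sᴴ = 0 := hP.inv.posSemidef.mul_eq_zero_of_conjTranspose_mul_mul_eq_zero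
    (by rwa [conjTranspose_conjTranspose])
  have hSH := mul_nonsing_inv_cancel_left P Sᴴ (isUnit_iff_ne_zero.mpr hP.det_pos.ne')
  rw [hS, Matrix.mul_zero] at hSH
  rw [← hSH, Matrix.zero_mul]

end PosDef

namespace PosSemidef

variable {A B : Matrix n n ℝ}

-- `1 - (1 + A)⁻¹ = (1 + A)⁻¹ * (A + A * A) * (1 + A)⁻¹`
theorem one_sub_inv_one_add (hA : A.PosSemidef) : (1 - (1 + A)⁻¹).PosSemidef := by
  have hP : (1 + A).PosDef := PosDef.one.add_posSemidef hA
  have hunit : IsUnit (1 + A).det := isUnit_iff_ne_zero.mpr hP.det_pos.ne'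
  have hAP : (A * (1 + A)).PosSemidef := by
    rw [mul_add, Matrix.mul_one]
    simpa only [hA.isHermitian.eq] using hA.add (posSemidef_conjTranspose_mul_self A)
  convert hAP.conjTranspose_mul_mul_same (1 + A)⁻¹ using 1
  have hinv : (1 + A)⁻¹ + (1 + A)⁻¹ * A = 1 := by
    simpa only [mul_add, Matrix.mul_one] using nonsing_inv_mul _ hunit
  rw [hP.inv.isHermitian.eq, Matrix.mul_assoc, Matrix.mul_assoc, mul_nonsing_inv _ hunit,
    Matrix.mul_one, eq_sub_of_add_eq' hinv]

/- With `B = Tᴴ * T`, `det (1 + A + B) = det (1 + A) * det (1 + T * (1 + A)⁻¹ * Tᴴ)` while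
`det (1 + B) = det (1 + T * Tᴴ)`, and `T * Tᴴ` exceeds `T * (1 + A)⁻¹ * Tᴴ` by
`T * (1 - (1 + A)⁻¹) * Tᴴ ≥ 0`, which vanishes only if `A * B = 0`. -/
theorem det_one_add_add_lt (hA : A.PosSemidef) (hB : B.PosSemidef) (hAB : A * B ≠ 0) :
    (1 + A + B).det < (1 + A).det * (1 + B).det := by
  have hP : (1 + A).PosDef := PosDef.one.add_posSemidef hA
  obtain ⟨T, rfl⟩ := CStarAlgebra.nonneg_iff_eq_star_mul_self.mp hB.nonneg
  have hQ : (1 + T * (1 + A)⁻¹ * Tᴴ).PosDef :=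
    PosDef.one.add_posSemidef (hP.inv.posSemidef.mul_mul_conjTranspose_same T)
  have hsplit : 1 + T * Tᴴ = 1 + T * (1 + A)⁻¹ * Tᴴ + T * (1 - (1 + A)⁻¹) * Tᴴ := by noncomm_ring
  rw [star_eq_conjTranspose] at hAB ⊢
  rw [hP.det_add_conjTranspose_mul_self, det_one_add_mul_comm Tᴴ T, hsplit]
  refine mul_lt_mul_of_pos_left (hQ.det_lt_det_add
    (hA.one_sub_inv_one_add.mul_mul_conjTranspose_same T) fun h => hAB ?_) hP.det_pos
  have hD : (1 - (1 + A)⁻¹) * Tᴴ = 0 :=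
    hA.one_sub_inv_one_add.mul_eq_zero_of_conjTranspose_mul_mul_eq_zero
      (by rwa [conjTranspose_conjTranspose])
  have hPD : (1 + A) * (1 - (1 + A)⁻¹) = A := by
    rw [mul_sub, mul_nonsing_inv _ (isUnit_iff_ne_zero.mpr hP.det_pos.ne'), Matrix.mul_one,
      add_sub_cancel_left]
  rw [← hPD, Matrix.mul_assoc, ← Matrix.mul_assoc _ Tᴴ, hD, Matrix.zero_mul, Matrix.mul_zero]

theorem det_one_add_add_le (hA : A.PosSemidef) (hB : B.PosSemidef) :
    (1 + A + B).det ≤ (1 + A).det * (1 + B).det := by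
  by_cases hAB : A * B = 0
  · exact (det_one_add_add_of_mul_eq_zero hAB).le
  · exact (hA.det_one_add_add_lt hB hAB).le

end PosSemidef

theorem det_one_add_sum_le_prod {ι : Type*} [DecidableEq ι] (s : Finset ι)
    {A : ι → Matrix n n ℝ} (hA : ∀ i ∈ s, (A i).PosSemidef) :
    (1 + ∑ i ∈ s, A i).det ≤ ∏ i ∈ s, (1 + A i).det := by
  induction s using Finset.induction_on with
  | empty => simp
  | insert a s ha ih =>
    have hs : ∀ i ∈ s, (A i).PosSemidef := fun i hi => hA i (Finset.mem_insert_of_mem hi)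
    have haA : (A a).PosSemidef := hA a (Finset.mem_insert_self a s)
    rw [Finset.sum_insert ha, Finset.prod_insert ha, ← add_assoc]
    calc (1 + A a + ∑ i ∈ s, A i).det ≤ (1 + A a).det * (1 + ∑ i ∈ s, A i).det :=
          haA.det_one_add_add_le (posSemidef_sum s hs)
      _ ≤ (1 + A a).det * ∏ i ∈ s, (1 + A i).det :=
          mul_le_mul_of_nonneg_left (ih hs) (zero_le_one.trans haA.one_le_det_one_add_s10)

theorem det_one_add_sum_lt_prod {ι : Type*} [Fintype ι] [DecidableEq ι] {A : ι → Matrix n n ℝ}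
    (hA : ∀ i, (A i).PosSemidef) {i j : ι} (hij : i ≠ j) (h : A i * A j ≠ 0) :
    (1 + ∑ k, A k).det < ∏ k, (1 + A k).det := by
  set t := (Finset.univ.erase i).erase j
  have hj : j ∈ Finset.univ.erase i := Finset.mem_erase.mpr ⟨hij.symm, Finset.mem_univ j⟩
  have hsum : ∑ k, A k = A i + A j + ∑ k ∈ t, A k := by
    rw [add_assoc, Finset.add_sum_erase _ A hj, Finset.add_sum_erase _ _ (Finset.mem_univ i)]
  have hprod : ∏ k, (1 + A k).det = (1 + A i).det * (1 + A j).det * ∏ k ∈ t, (1 + A k).det := by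
    rw [mul_assoc, Finset.mul_prod_erase _ (fun k => (1 + A k).det) hj,
      Finset.mul_prod_erase _ (fun k => (1 + A k).det) (Finset.mem_univ i)]
  have ht : (∑ k ∈ t, A k).PosSemidef := posSemidef_sum t fun k _ => hA k
  rw [hsum, hprod, ← add_assoc]
  calc (1 + (A i + A j) + ∑ k ∈ t, A k).det
      ≤ (1 + (A i + A j)).det * (1 + ∑ k ∈ t, A k).det :=
        ((hA i).add (hA j)).det_one_add_add_le ht
    _ < (1 + A i).det * (1 + A j).det * (1 + ∑ k ∈ t, A k).det := by
        rw [← add_assoc]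
        exact mul_lt_mul_of_pos_right ((hA i).det_one_add_add_lt (hA j) h)
          (zero_lt_one.trans_le ht.one_le_det_one_add_s10)
    _ ≤ (1 + A i).det * (1 + A j).det * ∏ k ∈ t, (1 + A k).det :=
        mul_le_mul_of_nonneg_left (det_one_add_sum_le_prod t fun k _ => hA k)
          (mul_nonneg (zero_le_one.trans (hA i).one_le_det_one_add_s10)
            (zero_le_one.trans (hA j).one_le_det_one_add_s10))

end

theorem mul_transpose_mul_mul_transpose_eq_zero_iff {m p q : Type*} [Fintype m]
    [Fintype p] [Fintype q] (X : Matrix m p ℝ) (Y : Matrix m q ℝ) :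
    X * Xᵀ * (Y * Yᵀ) = 0 ↔ Xᵀ * Y = 0 := by
  refine ⟨fun h => ?_, fun h => by rw [Matrix.mul_assoc, ← Matrix.mul_assoc Xᵀ, h]; simp⟩
  rw [← trace_conjTranspose_mul_self_eq_zero_iff, conjTranspose_eq_transpose_of_trivial,
    transpose_mul, transpose_transpose, Matrix.mul_assoc, trace_mul_comm]
  simp only [Matrix.mul_assoc] at h ⊢
  rw [h, trace_zero]

theorem det_one_add_smul_sum_mul_transpose_lt {ι m p : Type*} [Fintype ι] [DecidableEq ι]
    [Fintype m] [DecidableEq m] [Fintype p] [DecidableEq p] {X Y : ι → Matrix m p ℝ} {c : ℝ}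
    (hc : 0 < c) (hgram : ∀ j, (Y j)ᵀ * Y j = (X j)ᵀ * X j)
    (horth : Pairwise fun j l => (Y j)ᵀ * Y l = 0) {i j : ι} (hij : i ≠ j)
    (hX : (X i)ᵀ * X j ≠ 0) :
    (1 + c • ∑ k, X k * (X k)ᵀ).det < (1 + c • ∑ k, Y k * (Y k)ᵀ).det := by
  have hpsd : ∀ Z : Matrix m p ℝ, (c • (Z * Zᵀ)).PosSemidef := fun Z => by
    simpa using (posSemidef_self_mul_conjTranspose Z).smul hc.le
  have hprod : ∀ Z W : Matrix m p ℝ,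
      c • (Z * Zᵀ) * (c • (W * Wᵀ)) = (c * c) • (Z * Zᵀ * (W * Wᵀ)) :=
    fun Z W => by rw [Matrix.smul_mul, Matrix.mul_smul, smul_smul]
  simp_rw [Finset.smul_sum]
  calc (1 + ∑ k, c • (X k * (X k)ᵀ)).det < ∏ k, (1 + c • (X k * (X k)ᵀ)).det :=
        det_one_add_sum_lt_prod (fun k => hpsd (X k)) hij (by
          rw [hprod, smul_ne_zero_iff]
          exact ⟨(mul_pos hc hc).ne', (mul_transpose_mul_mul_transpose_eq_zero_iff _ _).not.mpr hX⟩)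
    _ = ∏ k, (1 + c • (Y k * (Y k)ᵀ)).det := by
        simp_rw [det_one_add_smul_mul_transpose_comm, hgram]
    _ = (1 + ∑ k, c • (Y k * (Y k)ᵀ)).det := by
        refine (det_one_add_sum_eq_prod _ fun k _ l _ hkl => ?_).symm
        dsimp only
        rw [hprod, (mul_transpose_mul_mul_transpose_eq_zero_iff _ _).mpr (horth hkl), smul_zero]

-- The columns of `V` form an orthonormal basis of the column space of `W`, so `V * Vᵀ` is the
-- orthogonal projection onto that space.
theorem exists_mul_transpose_mul_eq {m p : Type*} [Fintype m] [Fintype p]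
    (W : Matrix m p ℝ) : ∃ V : Matrix m (Fin W.rank) ℝ, V * Vᵀ * W = W := by
  let L : (m → ℝ) ≃ₗ[ℝ] EuclideanSpace ℝ m := (WithLp.linearEquiv 2 ℝ (m → ℝ)).symm
  let K : Submodule ℝ (EuclideanSpace ℝ m) :=
    (Submodule.span ℝ (Set.range W.col)).map L.toLinearMap
  have hK : Module.finrank ℝ K = W.rank := by
    rw [W.rank_eq_finrank_span_cols]; exact LinearEquiv.finrank_map_eq _ _
  let b := (stdOrthonormalBasis ℝ K).reindex (finCongr hK)
  let v : Fin W.rank → m → ℝ := fun a => (b a : EuclideanSpace ℝ m).ofLp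
  have hrepr : ∀ c, ∑ a, (v a ⬝ᵥ W.col c) • v a = W.col c := fun c => by
    have hc : WithLp.toLp 2 (W.col c) ∈ K :=
      Submodule.mem_map_of_mem (Submodule.subset_span ⟨c, rfl⟩)
    have := congrArg (fun x : K => (x : EuclideanSpace ℝ m).ofLp) (b.sum_repr' ⟨_, hc⟩)
    simpa [Submodule.coe_inner, EuclideanSpace.inner_eq_star_dotProduct, dotProduct_comm] using this
  refine ⟨Matrix.of fun i a => v a i, ?_⟩
  ext i c
  have := congrFun (hrepr c) i
  simp only [Finset.sum_apply, Pi.smul_apply, smul_eq_mul, dotProduct, col_apply,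
    Finset.sum_mul] at this
  simp only [mul_apply, transpose_apply, of_apply, Finset.sum_mul]
  rw [← this, Finset.sum_comm]
  exact Finset.sum_congr rfl fun a _ => Finset.sum_congr rfl fun j _ => by ring

theorem exists_orthogonal_copies_of_sum_rank_le {ι m p : Type*} [Fintype ι] [Fintype m]
    [DecidableEq m] [Fintype p] (W : ι → Matrix m p ℝ) (h : ∑ j, (W j).rank ≤ Fintype.card m) :
    ∃ Y : ι → Matrix m p ℝ, (∀ j, (Y j)ᵀ * Y j = (W j)ᵀ * W j) ∧
      Pairwise fun j l => (Y j)ᵀ * Y l = 0 := by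
  choose V hVW using fun j => (W j).exists_mul_transpose_mul_eq
  obtain ⟨e⟩ : Nonempty ((Σ j, Fin (W j).rank) ↪ m) :=
    Function.Embedding.nonempty_of_card_le (by simpa using h)
  let E : ∀ j, Matrix m (Fin (W j).rank) ℝ := fun j => (1 : Matrix m m ℝ).submatrix id (e ⟨j, ·⟩)
  have hE : ∀ j l, (E j)ᵀ * E l = (1 : Matrix m m ℝ).submatrix (e ⟨j, ·⟩) (e ⟨l, ·⟩) := by
    intro j l
    ext a b
    simp [E, mul_apply, one_apply]
  refine ⟨fun j => E j * (V j)ᵀ * W j, fun j => ?_, fun j l hjl => ?_⟩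
  · simp only [transpose_mul, transpose_transpose, Matrix.mul_assoc]
    rw [← Matrix.mul_assoc (E j)ᵀ, hE,
      submatrix_one (e ⟨j, ·⟩) (e.injective.comp sigma_mk_injective), Matrix.one_mul,
      ← Matrix.mul_assoc (V j), hVW]
  · simp only [transpose_mul, transpose_transpose, Matrix.mul_assoc]
    rw [← Matrix.mul_assoc (E j)ᵀ, hE]
    have : (1 : Matrix m m ℝ).submatrix (e ⟨j, ·⟩) (e ⟨l, ·⟩) = 0 := by
      ext a b
      exact one_apply_ne fun hab => hjl (congrArg Sigma.fst (e.injective hab))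
    rw [this, Matrix.zero_mul, Matrix.mul_zero, Matrix.mul_zero]

end Matrix

section memMat

variable {m k : ℕ} (π : Fin m → Fin k)

theorem memMat_transpose (j : Fin k) : (memMat π j)ᵀ = memMat π j := diagonal_transpose _

theorem memMat_mul_memMat (j l : Fin k) :
    memMat π j * memMat π l = if j = l then memMat π j else 0 := by
  ext a b
  by_cases h : j = l <;> simp [memMat, diagonal_apply, h] <;> grind

theorem memMat_mul_self (j : Fin k) : memMat π j * memMat π j = memMat π j := by
  simp [memMat_mul_memMat]

theorem sum_memMat : ∑ j, memMat π j = 1 := by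
  ext a b
  simp [memMat, Matrix.sum_apply, diagonal_apply, one_apply]

variable {n : ℕ}

theorem sum_mul_memMat_mul_memMat (Y : Fin k → Matrix (Fin n) (Fin m) ℝ) (l : Fin k) :
    (∑ j, Y j * memMat π j) * memMat π l = Y l * memMat π l := by
  rw [Matrix.sum_mul, Fintype.sum_eq_single l fun j hj => by
    rw [Matrix.mul_assoc, memMat_mul_memMat, if_neg hj, Matrix.mul_zero], Matrix.mul_assoc,
    memMat_mul_self]

theorem mul_memMat_transpose_mul_mul_memMat (X Y : Matrix (Fin n) (Fin m) ℝ) (j l : Fin k) :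
    (X * memMat π j)ᵀ * (Y * memMat π l) = memMat π j * (Xᵀ * Y) * memMat π l := by
  simp only [transpose_mul, memMat_transpose, Matrix.mul_assoc]

theorem mul_memMat_mul_transpose (Z : Matrix (Fin n) (Fin m) ℝ) (j : Fin k) :
    Z * memMat π j * Zᵀ = Z * memMat π j * (Z * memMat π j)ᵀ := by
  rw [transpose_mul, memMat_transpose, ← Matrix.mul_assoc,
    Matrix.mul_assoc Z (memMat π j) (memMat π j), memMat_mul_self]

theorem mul_transpose_eq_sum_memMat (Z : Matrix (Fin n) (Fin m) ℝ) :
    Z * Zᵀ = ∑ j, Z * memMat π j * (Z * memMat π j)ᵀ := by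
  calc Z * Zᵀ = Z * (∑ j, memMat π j) * Zᵀ := by rw [sum_memMat, Matrix.mul_one]
    _ = _ := by simp_rw [Matrix.mul_sum, Matrix.sum_mul, mul_memMat_mul_transpose]

end memMat

theorem deltaR_lt_deltaR_of_pairwise_orthogonal {n m k : ℕ} {π : Fin m → Fin k} {ε : ℝ}
    (hε : 0 < ε) {Z Z' : Matrix (Fin n) (Fin m) ℝ}
    (hgram : ∀ j, (Z' * memMat π j)ᵀ * (Z' * memMat π j) = (Z * memMat π j)ᵀ * (Z * memMat π j))
    (horth : Pairwise fun j l => (Z' * memMat π j)ᵀ * (Z' * memMat π l) = 0) {i j : Fin k}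
    (hij : i ≠ j) (hZ : (Z * memMat π i)ᵀ * (Z * memMat π j) ≠ 0) :
    deltaR π ε Z < deltaR π ε Z' := by
  have hm : 0 < m := Nat.pos_of_ne_zero fun h => by subst h; exact hZ (Subsingleton.elim _ _)
  have hn : 0 < n := Nat.pos_of_ne_zero fun h => by
    subst h
    exact hZ (by rw [Subsingleton.elim (Z * memMat π i) 0, transpose_zero, Matrix.zero_mul])
  set c : ℝ := n / (m * ε ^ 2)
  have hc : 0 < c := by positivity
  have hcompress : ∀ (W : Matrix (Fin n) (Fin m) ℝ) (a : ℝ) l,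
      (1 + a • (W * memMat π l * Wᵀ)).det =
        (1 + a • ((W * memMat π l)ᵀ * (W * memMat π l))).det := fun W a l => by
    rw [mul_memMat_mul_transpose, det_one_add_smul_mul_transpose_comm]
  have hfirst : (1 + c • (Z * Zᵀ)).det < (1 + c • (Z' * Z'ᵀ)).det := by
    rw [mul_transpose_eq_sum_memMat π Z, mul_transpose_eq_sum_memMat π Z']
    exact det_one_add_smul_sum_mul_transpose_lt hc hgram horth hij hZ
  have hpsd : (c • (Z * Zᵀ)).PosSemidef := by
    simpa using (posSemidef_self_mul_conjTranspose Z).smul hc.le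
  have hpos : 0 < (1 + c • (Z * Zᵀ)).det := zero_lt_one.trans_le hpsd.one_le_det_one_add_s10
  unfold deltaR
  simp_rw [hcompress Z', hgram, ← hcompress Z]
  linarith [Real.log_lt_log hpos hfirst]

theorem optimal_rate_reduction_orthogonal {n m k : ℕ} (π : Fin m → Fin k)
    (d : Fin k → ℕ) (ε : ℝ) (hε : 0 < ε) (hn : (∑ j, d j) ≤ n)
    (Zs : Matrix (Fin n) (Fin m) ℝ)
    (hfeas₁ : ∀ j, ((Zs * memMat π j) * (Zs * memMat π j)ᵀ).trace = (memMat π j).trace)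
    (hfeas₂ : ∀ j, (Zs * memMat π j).rank ≤ d j)
    (hopt : ∀ Z : Matrix (Fin n) (Fin m) ℝ,
      (∀ j, ((Z * memMat π j) * (Z * memMat π j)ᵀ).trace = (memMat π j).trace) →
      (∀ j, (Z * memMat π j).rank ≤ d j) →
      deltaR π ε Z ≤ deltaR π ε Zs) :
    ∀ j₁ j₂ : Fin k, j₁ ≠ j₂ → (Zs * memMat π j₁)ᵀ * (Zs * memMat π j₂) = 0 := by
  intro j₁ j₂ hj
  by_contra hZs
  obtain ⟨Y, hYgram, hYorth⟩ := exists_orthogonal_copies_of_sum_rank_le (Zs * memMat π ·)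
    (by simpa using (Finset.sum_le_sum fun j _ => hfeas₂ j).trans hn)
  set Z' := ∑ j, Y j * memMat π j
  have hblock : ∀ l, Z' * memMat π l = Y l * memMat π l := sum_mul_memMat_mul_memMat π Y
  have hgram : ∀ j, (Z' * memMat π j)ᵀ * (Z' * memMat π j) =
      (Zs * memMat π j)ᵀ * (Zs * memMat π j) := fun j => by
    rw [hblock, mul_memMat_transpose_mul_mul_memMat, hYgram,
      ← mul_memMat_transpose_mul_mul_memMat, Matrix.mul_assoc Zs, memMat_mul_self]
  have horth : Pairwise fun j l => (Z' * memMat π j)ᵀ * (Z' * memMat π l) = 0 := by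
    intro j l hjl
    show (Z' * memMat π j)ᵀ * (Z' * memMat π l) = 0
    rw [hblock, hblock, mul_memMat_transpose_mul_mul_memMat, hYorth hjl, Matrix.mul_zero,
      Matrix.zero_mul]
  have hfeas₁' : ∀ j, (Z' * memMat π j * (Z' * memMat π j)ᵀ).trace = (memMat π j).trace :=
    fun j => by rw [trace_mul_comm, hgram, ← trace_mul_comm, hfeas₁]
  have hfeas₂' : ∀ j, (Z' * memMat π j).rank ≤ d j := fun j => by
    rw [← rank_transpose_mul_self, hgram, rank_transpose_mul_self]; exact hfeas₂ j
  exact (hopt Z' hfeas₁' hfeas₂').not_gt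
    (deltaR_lt_deltaR_of_pairwise_orthogonal hε hgram horth hj hZs)
end
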